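/- For the Bayesian V-design objective G(w) = (1/2n)·Tr(X ((1/σ²) Xᵀ D(w) X + λI)⁻¹ Xᵀ) defined for nonnegative weight vectors w ∈ ℝ₊ⁿ, the Hessian of G with respect to w is given by ∇²_w G(w) = (σ²/n)·(X F⁺(w) Xᵀ) ∘ (X F⁺(w) Xᵀ X F⁺(w) Xᵀ), where F⁺(w) = (Xᵀ D(w) X + λσ² I)⁻¹ and ∘ denotes the Hadamard product; consequently ∇²_w G(w) is positive semi-definite and G is convex on ℝ₊ⁿ. -/

import Mathlib

/-!
Write `F(w) = Xᵀ D(w) X + λσ² I` and `M(w) = X F(w)⁻¹ Xᵀ`; then `G = (σ²/2n) tr M`.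
Since `d(F⁻¹) = -F⁻¹ (dF) F⁻¹`, the derivative of `M` in direction `v` is `-M D(v) M`, so
`∂ᵢG = -(σ²/2n) (M²)ᵢᵢ` and, differentiating once more and using the symmetry of `M`,
`∂ⱼ∂ᵢG = (σ²/n) Mᵢⱼ (M²)ᵢⱼ`. Both `M` and `M²` are positive semidefinite, hence so is their
Hadamard product (Schur). Convexity does not need the Hessian: `w ↦ F(w)` is affine, inversion
is operator convex on positive definite matrices, and `P ↦ tr (X P Xᵀ)` is monotone.
-/

open Matrix

namespace Matrix

lemma inv_smul_of_ne_zero {ι K : Type*} [Fintype ι] [DecidableEq ι] [Field K] {k : K}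
    (hk : k ≠ 0) (A : Matrix ι ι K) : (k • A)⁻¹ = k⁻¹ • A⁻¹ := by
  by_cases hA : IsUnit A.det
  · exact inv_smul' A (Units.mk0 k hk) hA
  · have hkA : ¬ IsUnit (k • A).det := by
      simpa [det_smul, isUnit_iff_ne_zero, hk] using hA
    rw [nonsing_inv_apply_not_isUnit _ hkA, nonsing_inv_apply_not_isUnit _ hA, smul_zero]

section SingleEntry

variable {ι R : Type*} [Fintype ι] [DecidableEq ι]

lemma mul_diagonal_single_mul_apply [Semiring R] (A B : Matrix ι ι R) (i j k : ι) :
    (A * diagonal (Pi.single j (1 : R)) * B) i k = A i j * B j k := by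
  rw [mul_apply]
  simp [mul_diagonal, Pi.single_apply]

lemma trace_mul_diagonal_single_mul [CommSemiring R] (A B : Matrix ι ι R) (i : ι) :
    trace (A * diagonal (Pi.single i (1 : R)) * B) = (B * A) i i := by
  rw [trace_mul_comm, ← Matrix.mul_assoc]
  simp [trace, mul_diagonal, Pi.single_apply]

end SingleEntry

section OperatorConvexity

open scoped ComplexOrder

variable {ι 𝕜 : Type*} [RCLike 𝕜]

lemma convex_setOf_posDef : Convex ℝ {A : Matrix ι ι 𝕜 | A.PosDef} := by
  intro A hA B hB a b ha hb hab
  rcases ha.eq_or_lt with rfl | ha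
  · simpa [show b = 1 by linarith] using hB
  · exact (hA.smul ha).add_posSemidef (hB.posSemidef.smul hb)

variable [Fintype ι] [DecidableEq ι]

lemma PosDef.posSemidef_fromBlocks_one_one_inv {A : Matrix ι ι 𝕜} (hA : A.PosDef) :
    (fromBlocks A 1 1 A⁻¹).PosSemidef := by
  have := hA.isUnit.invertible
  simpa using (PosDef.fromBlocks₁₁ (1 : Matrix ι ι 𝕜) A⁻¹ hA).mpr (by simpa using PosSemidef.zero)

open scoped MatrixOrder in
/-- `a • A⁻¹ + b • B⁻¹ - (a • A + b • B)⁻¹` is the Schur complement of the positive semidefinite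
block matrix `a • [A 1; 1 A⁻¹] + b • [B 1; 1 B⁻¹]`. -/
theorem convexOn_inv : ConvexOn ℝ {A : Matrix ι ι 𝕜 | A.PosDef} Inv.inv := by
  refine ⟨convex_setOf_posDef, fun A hA B hB a b ha hb hab => ?_⟩
  have hAB : (a • A + b • B).PosDef := convex_setOf_posDef hA hB ha hb hab
  have := hAB.isUnit.invertible
  have hblocks : (fromBlocks (a • A + b • B) 1 1 (a • A⁻¹ + b • B⁻¹)).PosSemidef := by
    have h := (hA.posSemidef_fromBlocks_one_one_inv.smul ha).add
      (hB.posSemidef_fromBlocks_one_one_inv.smul hb)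
    rwa [fromBlocks_smul, fromBlocks_smul, fromBlocks_add, ← add_smul, hab, one_smul] at h
  rw [le_iff]
  simpa using (PosDef.fromBlocks₁₁ 1 (a • A⁻¹ + b • B⁻¹) hAB).mp (by simpa using hblocks)

end OperatorConvexity

end Matrix

namespace BayesianVDesign

variable {ι κ : Type*} [Fintype ι] [DecidableEq ι] [DecidableEq κ] (X : Matrix ι κ ℝ) (c : ℝ)

/-- The paper's `F(w)` for `c = λσ²`. -/
noncomputable def infoMatrix (w : ι → ℝ) : Matrix κ κ ℝ := Xᵀ * diagonal w * X + c • 1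

variable {X c}

lemma isSymm_infoMatrix (w : ι → ℝ) : (infoMatrix X c w).IsSymm := by
  simp [IsSymm, infoMatrix, transpose_mul, Matrix.mul_assoc]

lemma infoMatrix_smul_add_smul {a b : ℝ} (hab : a + b = 1) (x y : ι → ℝ) :
    infoMatrix X c (a • x + b • y) = a • infoMatrix X c x + b • infoMatrix X c y := by
  have hD : diagonal (a • x + b • y) = a • diagonal x + b • diagonal y := by
    ext i j
    by_cases h : i = j <;> simp [h]
  simp only [infoMatrix, hD, Matrix.mul_add, Matrix.add_mul, Matrix.mul_smul, Matrix.smul_mul]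
  linear_combination (norm := module) (-hab) • (c • 1 : Matrix κ κ ℝ)

variable [Fintype κ]

lemma infoMatrix_posDef (hc : 0 < c) {w : ι → ℝ} (hw : 0 ≤ w) : (infoMatrix X c w).PosDef := by
  have hXDX : (Xᵀ * diagonal w * X).PosSemidef := by
    simpa using (PosSemidef.diagonal hw).conjTranspose_mul_mul_same X
  exact PosDef.posSemidef_add hXDX (PosDef.one.smul hc)

variable (X c) in
noncomputable def hatMatrix (w : ι → ℝ) : Matrix ι ι ℝ := X * (infoMatrix X c w)⁻¹ * Xᵀ

lemma isSymm_hatMatrix (w : ι → ℝ) : (hatMatrix X c w).IsSymm := by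
  simp [IsSymm, hatMatrix, transpose_mul, (isSymm_infoMatrix w).inv.eq, Matrix.mul_assoc]

lemma hatMatrix_posSemidef (hc : 0 < c) {w : ι → ℝ} (hw : 0 ≤ w) :
    (hatMatrix X c w).PosSemidef := by
  have h := (infoMatrix_posDef (X := X) hc hw).inv.posSemidef.mul_mul_conjTranspose_same X
  rwa [conjTranspose_eq_transpose_of_trivial] at h

lemma hatMatrix_mul_self_posSemidef (w : ι → ℝ) :
    (hatMatrix X c w * hatMatrix X c w).PosSemidef := by
  simpa [(isSymm_hatMatrix w).eq] using posSemidef_conjTranspose_mul_self (hatMatrix X c w)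

lemma mul_inv_smul_gram_add_smul_one_mul {t : ℝ} (ht : t ≠ 0) (lam : ℝ) (w : ι → ℝ) :
    X * (t⁻¹ • (Xᵀ * diagonal w * X) + lam • 1)⁻¹ * Xᵀ = t • hatMatrix X (lam * t) w := by
  have h : t⁻¹ • (Xᵀ * diagonal w * X) + lam • 1 = t⁻¹ • infoMatrix X (lam * t) w := by
    rw [infoMatrix, smul_add, smul_smul, mul_comm lam, ← mul_assoc, inv_mul_cancel₀ ht, one_mul]
  rw [h, inv_smul_of_ne_zero (inv_ne_zero ht), inv_inv, Matrix.mul_smul, Matrix.smul_mul,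
    hatMatrix]

lemma hadamard_hatMatrix_mul_self (w : ι → ℝ) :
    (X * (Xᵀ * diagonal w * X + c • 1)⁻¹ * Xᵀ) ⊙
        (X * (Xᵀ * diagonal w * X + c • 1)⁻¹ * Xᵀ * X * (Xᵀ * diagonal w * X + c • 1)⁻¹ * Xᵀ) =
      hatMatrix X c w ⊙ (hatMatrix X c w * hatMatrix X c w) := by
  simp only [hatMatrix, infoMatrix, Matrix.mul_assoc]

open scoped MatrixOrder in
lemma convexOn_trace_hatMatrix (hc : 0 < c) :
    ConvexOn ℝ {w : ι → ℝ | 0 ≤ w} fun w => trace (hatMatrix X c w) := by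
  refine ⟨convex_Ici 0, fun x hx y hy a b ha hb hab => ?_⟩
  have hinv : (a • infoMatrix X c x + b • infoMatrix X c y)⁻¹ ≤
      a • (infoMatrix X c x)⁻¹ + b • (infoMatrix X c y)⁻¹ :=
    convexOn_inv.2 (infoMatrix_posDef hc hx) (infoMatrix_posDef hc hy) ha hb hab
  have := (le_iff.mp hinv).mul_mul_conjTranspose_same X |>.trace_nonneg
  simp only [hatMatrix, infoMatrix_smul_add_smul hab, smul_eq_mul]
  simpa [Matrix.mul_sub, Matrix.sub_mul, Matrix.mul_add, Matrix.add_mul, trace_sub, trace_add,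
    trace_smul] using this

section Derivatives

-- Any norm will do: the derivatives below only see the topology of the finite-dimensional space.
attribute [local instance] Matrix.linftyOpNormedAddCommGroup Matrix.linftyOpNormedSpace
  Matrix.linftyOpNormedRing Matrix.linftyOpNormedAlgebra

open ContinuousLinearMap

lemma isOpen_setOf_isUnit_infoMatrix : IsOpen {w : ι → ℝ | IsUnit (infoMatrix X c w)} :=
  (Units.isOpen : IsOpen {A : Matrix κ κ ℝ | IsUnit A}).preimage (by unfold infoMatrix; fun_prop)

lemma hasFDerivAt_hatMatrix {w : ι → ℝ} (hw : IsUnit (infoMatrix X c w)) :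
    HasFDerivAt (hatMatrix X c)
      (-(mulLeftRight ℝ (Matrix ι ι ℝ) (hatMatrix X c w) (hatMatrix X c w)).comp
        (diagonalLinearMap ι ℝ ℝ).toContinuousLinearMap) w := by
  let gram : (ι → ℝ) →L[ℝ] Matrix κ κ ℝ := LinearMap.toContinuousLinearMap
    ((mulRightLinearMap κ ℝ X).comp ((mulLeftLinearMap ι ℝ Xᵀ).comp (diagonalLinearMap ι ℝ ℝ)))
  let sandwich : Matrix κ κ ℝ →L[ℝ] Matrix ι ι ℝ := LinearMap.toContinuousLinearMap
    ((mulRightLinearMap ι ℝ Xᵀ).comp (mulLeftLinearMap κ ℝ X))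
  have hinfo : HasFDerivAt (infoMatrix X c) gram w := gram.hasFDerivAt.add_const (c • 1)
  have hinv := hasFDerivAt_ringInverse (𝕜 := ℝ) hw.unit
  rw [← Ring.inverse_unit hw.unit, hw.unit_spec, ← nonsing_inv_eq_ringInverse] at hinv
  have hhat : hatMatrix X c = sandwich ∘ Ring.inverse ∘ infoMatrix X c := by
    ext1 u
    simp [sandwich, hatMatrix, nonsing_inv_eq_ringInverse]
  have hderiv : sandwich.comp ((-mulLeftRight ℝ (Matrix κ κ ℝ) (infoMatrix X c w)⁻¹
      (infoMatrix X c w)⁻¹).comp gram) =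
      -(mulLeftRight ℝ (Matrix ι ι ℝ) (hatMatrix X c w) (hatMatrix X c w)).comp
        (diagonalLinearMap ι ℝ ℝ).toContinuousLinearMap := by
    ext1 v
    change X * -((infoMatrix X c w)⁻¹ * (Xᵀ * diagonal v * X) * (infoMatrix X c w)⁻¹) * Xᵀ =
      -(hatMatrix X c w * diagonal v * hatMatrix X c w)
    simp [hatMatrix, Matrix.mul_assoc]
  have h := (sandwich.hasFDerivAt.comp w (hinv.comp w hinfo)).congr_fderiv hderiv
  rwa [← hhat] at h

lemma fderiv_const_mul_trace_hatMatrix (C : ℝ) {w : ι → ℝ} (hw : IsUnit (infoMatrix X c w))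
    (i : ι) :
    fderiv ℝ (fun u => C * trace (hatMatrix X c u)) w (Pi.single i 1) =
      -C * (hatMatrix X c w * hatMatrix X c w) i i := by
  let traceCLM := (traceLinearMap ι ℝ ℝ).toContinuousLinearMap
  have h : HasFDerivAt (fun u => C * trace (hatMatrix X c u)) _ w :=
    (traceCLM.hasFDerivAt.comp w (hasFDerivAt_hatMatrix hw)).const_mul C
  rw [h.fderiv]
  change C * trace (-(hatMatrix X c w * diagonal (Pi.single i 1) * hatMatrix X c w)) = _
  rw [trace_neg, trace_mul_diagonal_single_mul]
  ring

lemma fderiv_fderiv_const_mul_trace_hatMatrix (C : ℝ) {w : ι → ℝ}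
    (hw : IsUnit (infoMatrix X c w)) (i j : ι) :
    fderiv ℝ (fun u => fderiv ℝ (fun v => C * trace (hatMatrix X c v)) u (Pi.single i 1)) w
        (Pi.single j 1) =
      2 * C * (hatMatrix X c w i j * (hatMatrix X c w * hatMatrix X c w) i j) := by
  have hfirst :
      (fun u => fderiv ℝ (fun v => C * trace (hatMatrix X c v)) u (Pi.single i 1)) =ᶠ[nhds w]
        fun u => -C * (hatMatrix X c u * hatMatrix X c u) i i := by
    filter_upwards [isOpen_setOf_isUnit_infoMatrix.mem_nhds hw] with u hu
    exact fderiv_const_mul_trace_hatMatrix C hu i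
  let entryCLM := (entryLinearMap ℝ ℝ i i).toContinuousLinearMap
  have hhat := hasFDerivAt_hatMatrix hw
  have h : HasFDerivAt (fun u => -C * (hatMatrix X c u * hatMatrix X c u) i i) _ w :=
    (entryCLM.hasFDerivAt.comp w (hhat.mul' hhat)).const_mul (-C)
  rw [hfirst.fderiv_eq, h.fderiv]
  set M := hatMatrix X c w
  change -C * (M * -(M * diagonal (Pi.single j 1) * M) + -(M * diagonal (Pi.single j 1) * M) * M :
    Matrix ι ι ℝ) i i = _
  have hM : M.IsSymm := isSymm_hatMatrix w
  have hM2 : (M * M).IsSymm := by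
    have h := isSymm_transpose_mul_self M
    rwa [hM.eq] at h
  rw [Matrix.mul_neg, Matrix.neg_mul, ← Matrix.mul_assoc, ← Matrix.mul_assoc,
    Matrix.mul_assoc (M * _) M M]
  simp only [Matrix.add_apply, Matrix.neg_apply, mul_diagonal_single_mul_apply, hM.apply,
    hM2.apply]
  ring

end Derivatives

end BayesianVDesign

open BayesianVDesign in
theorem bayesian_V_design_hessian_convex_general {n d : ℕ}
    (X : Matrix (Fin n) (Fin d) ℝ) (σ lam : ℝ) (hσ : 0 < σ) (hlam : 0 < lam) :
    letI Fp : (Fin n → ℝ) → Matrix (Fin d) (Fin d) ℝ := fun w =>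
      (Xᵀ * Matrix.diagonal w * X + (lam * σ ^ 2) • (1 : Matrix (Fin d) (Fin d) ℝ))⁻¹
    letI G : (Fin n → ℝ) → ℝ := fun w =>
      (1 / (2 * n)) * Matrix.trace
        (X * ((σ ^ 2)⁻¹ • (Xᵀ * Matrix.diagonal w * X) +
            lam • (1 : Matrix (Fin d) (Fin d) ℝ))⁻¹ * Xᵀ)
    letI Hm : (Fin n → ℝ) → Matrix (Fin n) (Fin n) ℝ := fun w =>
      (σ ^ 2 / n) • Matrix.hadamard (X * Fp w * Xᵀ) (X * Fp w * Xᵀ * X * Fp w * Xᵀ)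
    (∀ w : Fin n → ℝ, 0 ≤ w →
        (∀ i j, fderiv ℝ (fun u => fderiv ℝ G u (Pi.single i 1)) w (Pi.single j 1) =
          Hm w i j) ∧ (Hm w).PosSemidef) ∧
      ConvexOn ℝ {u : Fin n → ℝ | 0 ≤ u} G := by
  have hc : 0 < lam * σ ^ 2 := by positivity
  simp only [mul_inv_smul_gram_add_smul_one_mul (pow_ne_zero 2 hσ.ne'), trace_smul, smul_eq_mul,
    ← mul_assoc, hadamard_hatMatrix_mul_self]
  refine ⟨fun w hw => ⟨fun i j => ?_, ?_⟩, ?_⟩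
  · rw [fderiv_fderiv_const_mul_trace_hatMatrix _ (infoMatrix_posDef hc hw).isUnit,
      Matrix.smul_apply, hadamard_apply, smul_eq_mul]
    ring
  · exact ((hatMatrix_posSemidef hc hw).hadamard (hatMatrix_mul_self_posSemidef w)).smul
      (by positivity)
  · exact (convexOn_trace_hatMatrix hc).smul (by positivity)

/-- For the Bayesian V-design objective
`G(w) = (1/2n)·Tr(X ((1/σ²) Xᵀ D(w) X + λI)⁻¹ Xᵀ)` on nonnegative weight vectors, the
Hessian is `∇²_w G(w) = (σ²/n)·(X F⁺(w) Xᵀ) ∘ (X F⁺(w) Xᵀ X F⁺(w) Xᵀ)` with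
`F⁺(w) = (Xᵀ D(w) X + λσ² I)⁻¹` and `∘` the Hadamard product; consequently the Hessian
is positive semi-definite and `G` is convex on `ℝ₊ⁿ`. -/
theorem bayesian_V_design_hessian_convex {n d : ℕ} (hn : 0 < n)
    (X : Matrix (Fin n) (Fin d) ℝ) (σ lam : ℝ) (hσ : 0 < σ) (hlam : 0 < lam) :
    letI Fp : (Fin n → ℝ) → Matrix (Fin d) (Fin d) ℝ := fun w =>
      (Xᵀ * Matrix.diagonal w * X + (lam * σ ^ 2) • (1 : Matrix (Fin d) (Fin d) ℝ))⁻¹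
    letI G : (Fin n → ℝ) → ℝ := fun w =>
      (1 / (2 * n)) * Matrix.trace
        (X * ((σ ^ 2)⁻¹ • (Xᵀ * Matrix.diagonal w * X) +
            lam • (1 : Matrix (Fin d) (Fin d) ℝ))⁻¹ * Xᵀ)
    letI Hm : (Fin n → ℝ) → Matrix (Fin n) (Fin n) ℝ := fun w =>
      (σ ^ 2 / n) • Matrix.hadamard (X * Fp w * Xᵀ) (X * Fp w * Xᵀ * X * Fp w * Xᵀ)
    (∀ w : Fin n → ℝ, 0 ≤ w →
        (∀ i j, fderiv ℝ (fun u => fderiv ℝ G u (Pi.single i 1)) w (Pi.single j 1) =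
          Hm w i j) ∧ (Hm w).PosSemidef) ∧
      ConvexOn ℝ {u : Fin n → ℝ | 0 ≤ u} G :=
  bayesian_V_design_hessian_convex_general X σ lam hσ hlam
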